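/- The semidirect product C_7 ⋊ C_6 with trivial centre (the Frobenius group of order 42) has exactly 21 nonpower subgroups, and it has more than one Sylow p-subgroup for more than one prime p. -/
import Mathlib


/-- The power subgroup `G^m`: the subgroup generated by all `m`-th powers. -/
def powSub (G : Type*) [Group G] (m : ℕ) : Subgroup G :=
  Subgroup.closure {x : G | ∃ g : G, g ^ m = x}

/-- A subgroup is a nonpower subgroup if it is not `G^m` for any `m ≥ 1`. -/
def IsNonpower {G : Type*} [Group G] (H : Subgroup G) : Prop :=
  ¬ ∃ m : ℕ, 0 < m ∧ H = powSub G m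

/-- The number of nonpower subgroups of `G`. -/
noncomputable def nps (G : Type*) [Group G] : ℕ :=
  Nat.card {H : Subgroup G // IsNonpower H}

/-- The number of power subgroups of `G`. -/
noncomputable def ps (G : Type*) [Group G] : ℕ :=
  Nat.card {H : Subgroup G // ∃ m : ℕ, 0 < m ∧ H = powSub G m}

/-- The total number of subgroups of `G`. -/
noncomputable def numSubgroups (G : Type*) [Group G] : ℕ :=
  Nat.card (Subgroup G)

namespace F42A
instance : Fact (Nat.Prime 7) := ⟨by norm_num⟩

@[ext] structure K : Type where
  u : (ZMod 7)ˣ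
  t : ZMod 7
deriving DecidableEq

instance : Fintype K := Fintype.ofEquiv ((ZMod 7)ˣ × ZMod 7)
  { toFun := fun p => ⟨p.1, p.2⟩, invFun := fun x => (x.u, x.t),
    left_inv := fun _ => rfl, right_inv := fun _ => rfl }

def kmul (x y : K) : K := ⟨x.u * y.u, x.t + (x.u : ZMod 7) * y.t⟩
def kinv (x : K) : K := ⟨x.u⁻¹, -(((x.u⁻¹ : (ZMod 7)ˣ) : ZMod 7) * x.t)⟩

instance : Group K where
  mul := kmul
  one := ⟨1, 0⟩
  inv := kinv
  mul_assoc x y z := by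
    refine K.ext ?_ ?_
    · show (x.u * y.u) * z.u = x.u * (y.u * z.u); exact mul_assoc _ _ _
    · show (x.t + (x.u : ZMod 7) * y.t) + ((x.u * y.u : (ZMod 7)ˣ) : ZMod 7) * z.t
        = x.t + (x.u : ZMod 7) * (y.t + (y.u : ZMod 7) * z.t)
      push_cast [Units.val_mul]; ring
  one_mul x := by
    refine K.ext ?_ ?_
    · show 1 * x.u = x.u; simp
    · show (0 : ZMod 7) + ((1 : (ZMod 7)ˣ) : ZMod 7) * x.t = x.t; simp
  mul_one x := by
    refine K.ext ?_ ?_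
    · show x.u * 1 = x.u; simp
    · show x.t + (x.u : ZMod 7) * 0 = x.t; simp
  inv_mul_cancel x := by
    refine K.ext ?_ ?_
    · show x.u⁻¹ * x.u = 1; simp
    · show -(((x.u⁻¹ : (ZMod 7)ˣ) : ZMod 7) * x.t) + ((x.u⁻¹ : (ZMod 7)ˣ) : ZMod 7) * x.t = 0
      ring

lemma mul_def (x y : K) : x * y = ⟨x.u * y.u, x.t + (x.u : ZMod 7) * y.t⟩ := rfl
lemma one_def : (1 : K) = ⟨1, 0⟩ := rfl
lemma card_K : Nat.card K = 42 := by rw [Nat.card_eq_fintype_card]; rfl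

def proj : K →* (ZMod 7)ˣ := { toFun := K.u, map_one' := rfl, map_mul' := fun _ _ => rfl }

lemma proj_apply (x : K) : proj x = x.u := rfl

lemma u_pow (x : K) (n : ℕ) : (x ^ n).u = x.u ^ n := by
  induction n with
  | zero => rfl
  | succ n ih => rw [pow_succ, pow_succ, ← ih]; rfl

lemma mk_one_pow (t : ZMod 7) (n : ℕ) : (K.mk 1 t) ^ n = K.mk 1 (n * t) := by
  induction n with
  | zero => simp [one_def]
  | succ n ih =>
    rw [pow_succ, ih, mul_def]
    refine K.ext (by simp) ?_
    show (n : ZMod 7) * t + ((1 : (ZMod 7)ˣ) : ZMod 7) * t = ((n : ℕ) + 1 : ℕ) * t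
    push_cast
    ring

lemma eta_ker (x : K) (h : x.u = 1) : x = K.mk 1 x.t := by
  refine K.ext h rfl

-- zpowers membership for torsion elements
lemma mem_zpowers_cases {x y : K} {n : ℕ} (hn : 0 < n) (hx : x ^ n = 1)
    (hy : y ∈ Subgroup.zpowers x) : ∃ k < n, y = x ^ k := by
  obtain ⟨m, rfl⟩ := hy
  have hxn : x ^ (n : ℤ) = 1 := by rw [zpow_natCast, hx]
  refine ⟨(m % n).toNat, ?_, ?_⟩
  · have h1 : m % n < n := Int.emod_lt_of_pos m (by exact_mod_cast hn)
    omega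
  · have h0 : 0 ≤ m % n := Int.emod_nonneg m (by positivity)
    show x ^ m = _
    rw [← zpow_natCast, Int.toNat_of_nonneg h0]
    conv_lhs => rw [← Int.mul_ediv_add_emod m n]
    rw [zpow_add, zpow_mul, hxn, one_zpow, one_mul]
end F42A

namespace F42A
open Subgroup

def v2 : (ZMod 7)ˣ := ⟨2, 4, by decide, by decide⟩
def v3 : (ZMod 7)ˣ := ⟨3, 5, by decide, by decide⟩
def v4 : (ZMod 7)ˣ := ⟨4, 2, by decide, by decide⟩
def v5 : (ZMod 7)ˣ := ⟨5, 3, by decide, by decide⟩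
def v6 : (ZMod 7)ˣ := ⟨6, 6, by decide, by decide⟩

def W2 : Subgroup (ZMod 7)ˣ where
  carrier := {v | v = 1 ∨ v = v6}
  one_mem' := by left; rfl
  mul_mem' := by decide
  inv_mem' := by decide

def W3 : Subgroup (ZMod 7)ˣ where
  carrier := {v | v = 1 ∨ v = v2 ∨ v = v4}
  one_mem' := by left; rfl
  mul_mem' := by decide
  inv_mem' := by decide

lemma mem_W2 (v : (ZMod 7)ˣ) : v ∈ W2 ↔ v = 1 ∨ v = v6 := Iff.rfl
lemma mem_W3 (v : (ZMod 7)ˣ) : v ∈ W3 ↔ v = 1 ∨ v = v2 ∨ v = v4 := Iff.rfl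

lemma units_cases : ∀ v : (ZMod 7)ˣ, v = 1 ∨ v = v2 ∨ v = v3 ∨ v = v4 ∨ v = v5 ∨ v = v6 := by decide

lemma units_subgroups (U : Subgroup (ZMod 7)ˣ) : U = ⊥ ∨ U = W2 ∨ U = W3 ∨ U = ⊤ := by
  by_cases h3 : v3 ∈ U
  · right; right; right
    rw [Subgroup.eq_top_iff']
    intro v
    rcases units_cases v with h|h|h|h|h|h <;> subst h
    · exact one_mem U
    · have : v2 = v3 * v3 := by decide
      rw [this]; exact mul_mem h3 h3
    · exact h3
    · have : v4 = v3 * v3 * v3 * v3 := by decide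
      rw [this]; exact mul_mem (mul_mem (mul_mem h3 h3) h3) h3
    · have : v5 = v3 * v3 * v3 * v3 * v3 := by decide
      rw [this]; exact mul_mem (mul_mem (mul_mem (mul_mem h3 h3) h3) h3) h3
    · have : v6 = v3 * v3 * v3 := by decide
      rw [this]; exact mul_mem (mul_mem h3 h3) h3
  · have h5 : v5 ∉ U := by
      intro h5; exact h3 (by rw [show v3 = v5⁻¹ by decide]; exact inv_mem h5)
    by_cases h2 : v2 ∈ U
    · have h4 : v4 ∈ U := by rw [show v4 = v2 * v2 by decide]; exact mul_mem h2 h2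
      have h6 : v6 ∉ U := by
        intro h6; exact h5 (by rw [show v5 = v2 * v6 by decide]; exact mul_mem h2 h6)
      right; right; left
      ext v
      rw [mem_W3]
      constructor
      · intro hv
        rcases units_cases v with h|h|h|h|h|h <;> subst h
        · left; rfl
        · right; left; rfl
        · exact absurd hv h3
        · right; right; rfl
        · exact absurd hv h5
        · exact absurd hv h6
      · rintro (h|h|h) <;> subst h
        · exact one_mem U
        · exact h2
        · exact h4
    · have h4 : v4 ∉ U := by
        intro h4; exact h2 (by rw [show v2 = v4 * v4 by decide]; exact mul_mem h4 h4)
      by_cases h6 : v6 ∈ U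
      · right; left
        ext v
        rw [mem_W2]
        constructor
        · intro hv
          rcases units_cases v with h|h|h|h|h|h <;> subst h
          · left; rfl
          · exact absurd hv h2
          · exact absurd hv h3
          · exact absurd hv h4
          · exact absurd hv h5
          · right; rfl
        · rintro (h|h) <;> subst h
          · exact one_mem U
          · exact h6
      · left
        rw [eq_bot_iff]
        intro v hv
        rcases units_cases v with h|h|h|h|h|h <;> subst h
        · exact one_mem ⊥
        · exact absurd hv h2
        · exact absurd hv h3
        · exact absurd hv h4
        · exact absurd hv h5
        · exact absurd hv h6

theorem subgroup_classification (H : Subgroup K) :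
    H = ⊥ ∨ H = ⊤ ∨ H = proj.ker ∨ H = Subgroup.comap proj W2 ∨ H = Subgroup.comap proj W3 ∨
    (∃ t, H = Subgroup.zpowers (K.mk v6 t)) ∨ (∃ t, H = Subgroup.zpowers (K.mk v2 t)) ∨
    (∃ t, H = Subgroup.zpowers (K.mk v5 t)) := by
  by_cases hN : ∃ x ∈ H, x.u = 1 ∧ x ≠ 1
  · -- contains the kernel
    obtain ⟨x, hxH, hxu, hxne⟩ := hN
    have hxt : x.t ≠ 0 := by
      intro h
      exact hxne (K.ext hxu h)
    have hNle : proj.ker ≤ H := by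
      intro y hy
      have hyu : y.u = 1 := hy
      have hkey : y = x ^ ((y.t * x.t⁻¹).val) := by
        conv_lhs => rw [eta_ker y hyu]
        conv_rhs => rw [eta_ker x hxu]
        rw [mk_one_pow]
        refine K.ext rfl ?_
        show y.t = (((y.t * x.t⁻¹).val : ℕ) : ZMod 7) * x.t
        have : (((y.t * x.t⁻¹).val : ℕ) : ZMod 7) = y.t * x.t⁻¹ := by
          simp [ZMod.natCast_val, ZMod.cast_id]
        rw [this]
        field_simp
      rw [hkey]
      exact pow_mem hxH _
    have hcomap : H = Subgroup.comap proj (Subgroup.map proj H) := by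
      apply le_antisymm
      · intro y hy
        exact Subgroup.mem_comap.mpr (Subgroup.mem_map_of_mem proj hy)
      · intro y hy
        obtain ⟨z, hzH, hz⟩ := Subgroup.mem_comap.mp hy
        have hker : z⁻¹ * y ∈ proj.ker := by
          rw [MonoidHom.mem_ker, map_mul, map_inv, hz]
          simp
        have := mul_mem hzH (hNle hker)
        simpa using this
    rcases units_subgroups (Subgroup.map proj H) with h|h|h|h <;> rw [h] at hcomap
    · right; right; left
      rw [hcomap, MonoidHom.comap_bot]
    · right; right; right; left; exact hcomap
    · right; right; right; right; left; exact hcomap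
    · right; left
      rw [hcomap, Subgroup.comap_top]
  · -- trivial intersection with the kernel
    push_neg at hN
    have hN' : ∀ x ∈ H, x.u = 1 → x = 1 := fun x hx hu => by
      by_contra h
      exact h (hN x hx hu)
    have hdisj : ∀ x ∈ H, ∀ y ∈ H, x.u = y.u → x = y := by
      intro x hx y hy hxy
      have hm : x⁻¹ * y ∈ H := mul_mem (inv_mem hx) hy
      have hu : (x⁻¹ * y).u = 1 := by
        show proj (x⁻¹ * y) = 1
        rw [map_mul, map_inv]
        show (x.u)⁻¹ * y.u = 1
        rw [hxy, inv_mul_cancel]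
      have := hN' _ hm hu
      rw [← mul_one x, ← this, ← mul_assoc, mul_inv_cancel, one_mul]
    rcases units_subgroups (Subgroup.map proj H) with h|h|h|h
    · left
      rw [eq_bot_iff]
      intro y hy
      have : proj y ∈ Subgroup.map proj H := Subgroup.mem_map_of_mem proj hy
      rw [h, Subgroup.mem_bot] at this
      rw [hN' y hy this]
      exact one_mem ⊥
    · right; right; right; right; right; left
      have h6 : v6 ∈ Subgroup.map proj H := by rw [h]; exact Or.inr rfl
      obtain ⟨x, hxH, hxu0⟩ := h6
      have hxu : x.u = v6 := hxu0
      refine ⟨x.t, ?_⟩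
      have hx : x = K.mk v6 x.t := K.ext hxu rfl
      apply le_antisymm
      · intro y hy
        have : proj y ∈ Subgroup.map proj H := Subgroup.mem_map_of_mem proj hy
        rw [h] at this
        rcases this with h1 | h1
        · rw [hN' y hy h1]; exact one_mem _
        · have : y = x := hdisj y hy x hxH (h1.trans hxu.symm)
          rw [this, ← hx]
          exact Subgroup.mem_zpowers _
      · rw [← hx]
        exact Subgroup.zpowers_le.mpr hxH
    · right; right; right; right; right; right; left
      have h6 : v2 ∈ Subgroup.map proj H := by rw [h]; exact Or.inr (Or.inl rfl)
      obtain ⟨x, hxH, hxu0⟩ := h6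
      have hxu : x.u = v2 := hxu0
      refine ⟨x.t, ?_⟩
      have hx : x = K.mk v2 x.t := K.ext hxu rfl
      apply le_antisymm
      · intro y hy
        have : proj y ∈ Subgroup.map proj H := Subgroup.mem_map_of_mem proj hy
        rw [h] at this
        rcases this with h1 | h1 | h1
        · rw [hN' y hy h1]; exact one_mem _
        · have : y = x := hdisj y hy x hxH (h1.trans hxu.symm)
          rw [this, ← hx]
          exact Subgroup.mem_zpowers _
        · have hx2 : (x ^ 2).u = v4 := by
            rw [u_pow, hxu]
            decide
          have : y = x ^ 2 := hdisj y hy _ (pow_mem hxH 2) (h1.trans hx2.symm)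
          rw [this, ← hx]
          exact Subgroup.zpowers_le.mpr (Subgroup.mem_zpowers _) (pow_mem (Subgroup.mem_zpowers _) 2)
      · rw [← hx]
        exact Subgroup.zpowers_le.mpr hxH
    · right; right; right; right; right; right; right
      have h6 : v5 ∈ Subgroup.map proj H := by rw [h]; exact Subgroup.mem_top _
      obtain ⟨x, hxH, hxu0⟩ := h6
      have hxu : x.u = v5 := hxu0
      refine ⟨x.t, ?_⟩
      have hx : x = K.mk v5 x.t := K.ext hxu rfl
      have hupow : ∀ k : ℕ, (x ^ k).u = v5 ^ k := fun k => by rw [u_pow, hxu]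
      apply le_antisymm
      · intro y hy
        have hmem : ∀ k : ℕ, y = x ^ k → y ∈ Subgroup.zpowers (K.mk v5 x.t) := by
          intro k hk
          rw [hk, ← hx]
          exact Subgroup.zpowers_le.mpr (Subgroup.mem_zpowers _) (pow_mem (Subgroup.mem_zpowers _) k)
        rcases units_cases y.u with h1|h1|h1|h1|h1|h1
        · exact hmem 0 (hdisj y hy _ (pow_mem hxH 0) (by rw [hupow]; rw [h1]; decide))
        · exact hmem 4 (hdisj y hy _ (pow_mem hxH 4) (by rw [hupow]; rw [h1]; decide))
        · exact hmem 5 (hdisj y hy _ (pow_mem hxH 5) (by rw [hupow]; rw [h1]; decide))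
        · exact hmem 2 (hdisj y hy _ (pow_mem hxH 2) (by rw [hupow]; rw [h1]; decide))
        · exact hmem 1 (hdisj y hy _ (pow_mem hxH 1) (by rw [hupow]; rw [h1]; decide))
        · exact hmem 3 (hdisj y hy _ (pow_mem hxH 3) (by rw [hupow]; rw [h1]; decide))
      · rw [← hx]
        exact Subgroup.zpowers_le.mpr hxH
end F42A

namespace F42A
open Subgroup

lemma powSub_normal (G : Type*) [Group G] (m : ℕ) : (powSub G m).Normal := by
  constructor
  intro n hn g
  have h1 : (MulAut.conj g) n ∈ Subgroup.map (MulAut.conj g).toMonoidHom (powSub G m) :=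
    Subgroup.mem_map_of_mem _ hn
  rw [powSub, MonoidHom.map_closure] at h1
  have hs : (MulAut.conj g).toMonoidHom '' {x : G | ∃ h, h ^ m = x} = {x : G | ∃ h, h ^ m = x} := by
    ext y
    constructor
    · rintro ⟨x, ⟨h, rfl⟩, rfl⟩
      exact ⟨MulAut.conj g h, by rw [← map_pow]; rfl⟩
    · rintro ⟨h, rfl⟩
      refine ⟨(MulAut.conj g)⁻¹ (h ^ m), ⟨(MulAut.conj g)⁻¹ h, by rw [← map_pow]⟩, ?_⟩
      show (MulAut.conj g) ((MulAut.conj g)⁻¹ (h ^ m)) = h ^ m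
      exact MulEquiv.apply_symm_apply _ _
  rw [hs] at h1
  have : (MulAut.conj g) n = g * n * g⁻¹ := rfl
  rw [this] at h1
  exact h1

lemma u_coe_v2 : ((v2 : (ZMod 7)ˣ) : ZMod 7) = 2 := rfl
lemma u_coe_v5 : ((v5 : (ZMod 7)ˣ) : ZMod 7) = 5 := rfl

lemma mk_u (u : (ZMod 7)ˣ) (t : ZMod 7) : (K.mk u t).u = u := rfl
lemma u_one : (1 : K).u = 1 := rfl
lemma mk_t (u : (ZMod 7)ˣ) (t : ZMod 7) : (K.mk u t).t = t := rfl

lemma sq_mk (u : (ZMod 7)ˣ) (s : ZMod 7) :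
    (K.mk u s) ^ 2 = K.mk (u * u) (s + (u : ZMod 7) * s) := by
  rw [pow_two]; rfl

-- explicit power computations
lemma p2_sq (t : ZMod 7) : (K.mk v6 t) ^ 2 = 1 := by
  rw [sq_mk, one_def]
  refine K.ext (show v6 * v6 = (1 : (ZMod 7)ˣ) by decide) ?_
  show t + ((v6 : (ZMod 7)ˣ) : ZMod 7) * t = 0
  rw [show ((v6 : (ZMod 7)ˣ) : ZMod 7) = 6 from rfl]
  rw [show t + 6 * t = 7 * t by ring, show (7 : ZMod 7) = 0 by decide, zero_mul]

lemma p3_sq (t : ZMod 7) : (K.mk v2 t) ^ 2 = K.mk v4 (3 * t) := by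
  rw [sq_mk]
  refine K.ext (show v2 * v2 = v4 by decide) ?_
  show t + ((v2 : (ZMod 7)ˣ) : ZMod 7) * t = 3 * t
  rw [show ((v2 : (ZMod 7)ˣ) : ZMod 7) = 2 from rfl]; ring

lemma p3_cube (t : ZMod 7) : (K.mk v2 t) ^ 3 = 1 := by
  rw [pow_succ, p3_sq, mul_def, one_def]
  refine K.ext (show v4 * v2 = (1 : (ZMod 7)ˣ) by decide) ?_
  show 3 * t + ((v4 : (ZMod 7)ˣ) : ZMod 7) * t = 0
  rw [show ((v4 : (ZMod 7)ˣ) : ZMod 7) = 4 from rfl]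
  rw [show 3 * t + 4 * t = 7 * t by ring, show (7 : ZMod 7) = 0 by decide, zero_mul]

lemma p6_2 (t : ZMod 7) : (K.mk v5 t) ^ 2 = K.mk v4 (6 * t) := by
  rw [sq_mk]
  refine K.ext (show v5 * v5 = v4 by decide) ?_
  show t + ((v5 : (ZMod 7)ˣ) : ZMod 7) * t = 6 * t
  rw [u_coe_v5]; ring

lemma p6_3 (t : ZMod 7) : (K.mk v5 t) ^ 3 = K.mk v6 (3 * t) := by
  rw [pow_succ, p6_2, mul_def]
  refine K.ext (show v4 * v5 = v6 by decide) ?_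
  show 6 * t + ((v4 : (ZMod 7)ˣ) : ZMod 7) * t = 3 * t
  rw [show ((v4 : (ZMod 7)ˣ) : ZMod 7) = 4 from rfl]
  rw [show 6 * t + 4 * t = 3 * t + 7 * t by ring, show (7 : ZMod 7) = 0 by decide]; ring

lemma p6_4 (t : ZMod 7) : (K.mk v5 t) ^ 4 = K.mk v2 (2 * t) := by
  rw [pow_succ, p6_3, mul_def]
  refine K.ext (show v6 * v5 = v2 by decide) ?_
  show 3 * t + ((v6 : (ZMod 7)ˣ) : ZMod 7) * t = 2 * t
  rw [show ((v6 : (ZMod 7)ˣ) : ZMod 7) = 6 from rfl]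
  rw [show 3 * t + 6 * t = 2 * t + 7 * t by ring, show (7 : ZMod 7) = 0 by decide]; ring

lemma p6_5 (t : ZMod 7) : (K.mk v5 t) ^ 5 = K.mk v3 (4 * t) := by
  rw [pow_succ, p6_4, mul_def]
  refine K.ext (show v2 * v5 = v3 by decide) ?_
  show 2 * t + ((v2 : (ZMod 7)ˣ) : ZMod 7) * t = 4 * t
  rw [u_coe_v2]; ring

lemma p6_6 (t : ZMod 7) : (K.mk v5 t) ^ 6 = 1 := by
  rw [pow_succ, p6_5, mul_def, one_def]
  refine K.ext (show v3 * v5 = (1 : (ZMod 7)ˣ) by decide) ?_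
  show 4 * t + ((v3 : (ZMod 7)ˣ) : ZMod 7) * t = 0
  rw [show ((v3 : (ZMod 7)ˣ) : ZMod 7) = 3 from rfl]
  rw [show 4 * t + 3 * t = 7 * t by ring, show (7 : ZMod 7) = 0 by decide, zero_mul]

lemma mem_zp2 (t : ZMod 7) (y : K) :
    y ∈ zpowers (K.mk v6 t) ↔ y = 1 ∨ y = K.mk v6 t := by
  constructor
  · intro hy
    obtain ⟨k, hk, rfl⟩ := mem_zpowers_cases (by norm_num) (p2_sq t) hy
    interval_cases k
    · left; exact pow_zero _
    · right; exact pow_one _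
  · rintro (rfl | rfl)
    · exact one_mem _
    · exact mem_zpowers _

lemma mem_zp3 (t : ZMod 7) (y : K) :
    y ∈ zpowers (K.mk v2 t) ↔ y = 1 ∨ y = K.mk v2 t ∨ y = K.mk v4 (3 * t) := by
  constructor
  · intro hy
    obtain ⟨k, hk, rfl⟩ := mem_zpowers_cases (by norm_num) (p3_cube t) hy
    interval_cases k
    · left; exact pow_zero _
    · right; left; exact pow_one _
    · right; right; exact p3_sq t
  · rintro (rfl | rfl | rfl)
    · exact one_mem _
    · exact mem_zpowers _
    · exact (p3_sq t) ▸ zpow_mem (mem_zpowers _) 2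

lemma mem_zp6 (t : ZMod 7) (y : K) :
    y ∈ zpowers (K.mk v5 t) ↔ y = 1 ∨ y = K.mk v5 t ∨ y = K.mk v4 (6 * t) ∨
      y = K.mk v6 (3 * t) ∨ y = K.mk v2 (2 * t) ∨ y = K.mk v3 (4 * t) := by
  constructor
  · intro hy
    obtain ⟨k, hk, rfl⟩ := mem_zpowers_cases (by norm_num) (p6_6 t) hy
    interval_cases k
    · left; exact pow_zero _
    · right; left; exact pow_one _
    · right; right; left; exact p6_2 t
    · right; right; right; left; exact p6_3 t
    · right; right; right; right; left; exact p6_4 t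
    · right; right; right; right; right; exact p6_5 t
  · rintro (rfl | rfl | rfl | rfl | rfl | rfl)
    · exact one_mem _
    · exact mem_zpowers _
    · exact (p6_2 t) ▸ zpow_mem (mem_zpowers _) 2
    · exact (p6_3 t) ▸ zpow_mem (mem_zpowers _) 3
    · exact (p6_4 t) ▸ zpow_mem (mem_zpowers _) 4
    · exact (p6_5 t) ▸ zpow_mem (mem_zpowers _) 5

end F42A

namespace F42A
open Subgroup

lemma mem_ker_iff (x : K) : x ∈ proj.ker ↔ x.u = 1 := Iff.rfl
lemma mem_comapW2 (x : K) : x ∈ Subgroup.comap proj W2 ↔ (x.u = 1 ∨ x.u = v6) := Iff.rfl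
lemma mem_comapW3 (x : K) : x ∈ Subgroup.comap proj W3 ↔ (x.u = 1 ∨ x.u = v2 ∨ x.u = v4) := Iff.rfl

lemma pow42 (g : K) : g ^ 42 = 1 := by
  have h6 : (g ^ 6).u = 1 := by
    rw [u_pow]
    exact (by decide : ∀ v : (ZMod 7)ˣ, v ^ 6 = 1) g.u
  calc g ^ 42 = (g ^ 6) ^ 7 := by rw [← pow_mul]
    _ = (K.mk 1 (g ^ 6).t) ^ 7 := by rw [← eta_ker _ h6]
    _ = K.mk 1 ((7 : ℕ) * (g ^ 6).t) := mk_one_pow _ 7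
    _ = 1 := by
        rw [one_def]
        refine K.ext rfl ?_
        show ((7 : ℕ) : ZMod 7) * (g ^ 6).t = 0
        rw [show ((7 : ℕ) : ZMod 7) = 0 by decide, zero_mul]

lemma powSub_one : powSub K 1 = ⊤ := by
  rw [powSub, show {x : K | ∃ g : K, g ^ 1 = x} = Set.univ from
    Set.eq_univ_of_forall fun x => ⟨x, pow_one x⟩, Subgroup.closure_univ]

lemma powSub_42 : powSub K 42 = ⊥ := by
  rw [powSub, show {x : K | ∃ g : K, g ^ 42 = x} = {1} from ?_, Subgroup.closure_singleton_one]
  ext x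
  constructor
  · rintro ⟨g, rfl⟩; exact pow42 g
  · rintro rfl; exact ⟨1, one_pow 42⟩

lemma powSub_6 : powSub K 6 = proj.ker := by
  rw [powSub, show {x : K | ∃ g : K, g ^ 6 = x} = ↑proj.ker from ?_, Subgroup.closure_eq]
  ext x
  constructor
  · rintro ⟨g, rfl⟩
    rw [SetLike.mem_coe, mem_ker_iff, u_pow]
    exact (by decide : ∀ v : (ZMod 7)ˣ, v ^ 6 = 1) g.u
  · intro hx
    rw [SetLike.mem_coe, mem_ker_iff] at hx
    refine ⟨K.mk 1 (6 * x.t), ?_⟩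
    rw [mk_one_pow]
    refine (K.ext hx.symm ?_ : K.mk 1 ((6 : ℕ) * (6 * x.t)) = x)
    show ((6 : ℕ) : ZMod 7) * (6 * x.t) = x.t
    rw [show ((6 : ℕ) : ZMod 7) = 6 by decide]
    rw [show (6 : ZMod 7) * (6 * x.t) = 36 * x.t by ring, show (36 : ZMod 7) = 1 by decide,
      one_mul]

lemma powSub_2 : powSub K 2 = Subgroup.comap proj W3 := by
  rw [powSub, show {x : K | ∃ g : K, g ^ 2 = x} = ↑(Subgroup.comap proj W3) from ?_,
    Subgroup.closure_eq]
  ext x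
  constructor
  · rintro ⟨g, rfl⟩
    rw [SetLike.mem_coe, mem_comapW3, u_pow]
    exact (by decide : ∀ v : (ZMod 7)ˣ, v ^ 2 = 1 ∨ v ^ 2 = v2 ∨ v ^ 2 = v4) g.u
  · intro hx
    rw [SetLike.mem_coe, mem_comapW3] at hx
    rcases hx with h | h | h
    · refine ⟨K.mk 1 (4 * x.t), ?_⟩
      rw [sq_mk]
      refine K.ext h.symm ?_
      show 4 * x.t + ((1 : (ZMod 7)ˣ) : ZMod 7) * (4 * x.t) = x.t
      rw [show ((1 : (ZMod 7)ˣ) : ZMod 7) = 1 from rfl]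
      rw [show 4 * x.t + 1 * (4 * x.t) = 8 * x.t by ring, show (8 : ZMod 7) = 1 by decide,
        one_mul]
    · refine ⟨K.mk v3 (2 * x.t), ?_⟩
      rw [sq_mk]
      refine K.ext ((by decide : v3 * v3 = v2).trans h.symm) ?_
      show 2 * x.t + ((v3 : (ZMod 7)ˣ) : ZMod 7) * (2 * x.t) = x.t
      rw [show ((v3 : (ZMod 7)ˣ) : ZMod 7) = 3 from rfl]
      rw [show 2 * x.t + 3 * (2 * x.t) = 8 * x.t by ring, show (8 : ZMod 7) = 1 by decide,
        one_mul]
    · refine ⟨K.mk v2 (5 * x.t), ?_⟩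
      rw [sq_mk]
      refine K.ext ((by decide : v2 * v2 = v4).trans h.symm) ?_
      show 5 * x.t + ((v2 : (ZMod 7)ˣ) : ZMod 7) * (5 * x.t) = x.t
      rw [u_coe_v2]
      rw [show 5 * x.t + 2 * (5 * x.t) = 15 * x.t by ring, show (15 : ZMod 7) = 1 by decide,
        one_mul]

lemma cube_mk (u : (ZMod 7)ˣ) (s : ZMod 7) :
    (K.mk u s) ^ 3 = K.mk (u * u * u) (s + (u : ZMod 7) * s + ((u * u : (ZMod 7)ˣ) : ZMod 7) * s) := by
  rw [pow_succ, sq_mk, mul_def]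

lemma powSub_3 : powSub K 3 = Subgroup.comap proj W2 := by
  rw [powSub, show {x : K | ∃ g : K, g ^ 3 = x} = ↑(Subgroup.comap proj W2) from ?_,
    Subgroup.closure_eq]
  ext x
  constructor
  · rintro ⟨g, rfl⟩
    rw [SetLike.mem_coe, mem_comapW2, u_pow]
    exact (by decide : ∀ v : (ZMod 7)ˣ, v ^ 3 = 1 ∨ v ^ 3 = v6) g.u
  · intro hx
    rw [SetLike.mem_coe, mem_comapW2] at hx
    rcases hx with h | h
    · refine ⟨K.mk 1 (5 * x.t), ?_⟩
      rw [cube_mk]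
      refine K.ext ((by decide : (1 : (ZMod 7)ˣ) * 1 * 1 = 1).trans h.symm) ?_
      show 5 * x.t + ((1 : (ZMod 7)ˣ) : ZMod 7) * (5 * x.t) +
        ((1 * 1 : (ZMod 7)ˣ) : ZMod 7) * (5 * x.t) = x.t
      rw [show ((1 : (ZMod 7)ˣ) : ZMod 7) = 1 from rfl,
        show ((1 * 1 : (ZMod 7)ˣ) : ZMod 7) = 1 by decide]
      rw [show 5 * x.t + 1 * (5 * x.t) + 1 * (5 * x.t) = 15 * x.t by ring,
        show (15 : ZMod 7) = 1 by decide, one_mul]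
    · refine ⟨K.mk v3 (6 * x.t), ?_⟩
      rw [cube_mk]
      refine K.ext ((by decide : v3 * v3 * v3 = v6).trans h.symm) ?_
      show 6 * x.t + ((v3 : (ZMod 7)ˣ) : ZMod 7) * (6 * x.t) +
        ((v3 * v3 : (ZMod 7)ˣ) : ZMod 7) * (6 * x.t) = x.t
      rw [show ((v3 : (ZMod 7)ˣ) : ZMod 7) = 3 from rfl,
        show ((v3 * v3 : (ZMod 7)ˣ) : ZMod 7) = 2 by decide]
      rw [show 6 * x.t + 3 * (6 * x.t) + 2 * (6 * x.t) = 36 * x.t by ring,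
        show (36 : ZMod 7) = 1 by decide, one_mul]

end F42A

namespace F42A
open Subgroup

lemma inv_a : (K.mk 1 1)⁻¹ = K.mk 1 (-1) := by
  refine K.ext ?_ ?_
  · show (1 : (ZMod 7)ˣ)⁻¹ = 1; simp
  · show -((((1 : (ZMod 7)ˣ)⁻¹ : (ZMod 7)ˣ)) : ZMod 7) * (1 : ZMod 7) = -1
    simp

lemma conj_a (x : K) :
    (K.mk 1 1) * x * (K.mk 1 1)⁻¹ = K.mk x.u (1 + x.t - (x.u : ZMod 7)) := by
  rw [inv_a, mul_def, mul_def]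
  refine K.ext ?_ ?_
  · show (1 * x.u) * 1 = x.u; simp
  · show (1 + ((1 : (ZMod 7)ˣ) : ZMod 7) * x.t) + ((1 * x.u : (ZMod 7)ˣ) : ZMod 7) * (-1)
      = 1 + x.t - (x.u : ZMod 7)
    simp only [Units.val_mul, Units.val_one]
    ring

lemma not_normal_zp2 (t : ZMod 7) : ¬ (zpowers (K.mk v6 t)).Normal := by
  intro h
  have hc := h.conj_mem _ (mem_zpowers (K.mk v6 t)) (K.mk 1 1)
  rw [conj_a] at hc
  rcases (mem_zp2 t _).mp hc with h1 | h1
  · exact absurd (congrArg K.u h1) (by simp only [mk_u, u_one]; decide)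
  · have h2 := congrArg K.t h1
    have h3 : (1 : ZMod 7) = ((v6 : (ZMod 7)ˣ) : ZMod 7) := by linear_combination h2
    exact absurd h3 (by decide)

lemma not_normal_zp3 (t : ZMod 7) : ¬ (zpowers (K.mk v2 t)).Normal := by
  intro h
  have hc := h.conj_mem _ (mem_zpowers (K.mk v2 t)) (K.mk 1 1)
  rw [conj_a] at hc
  rcases (mem_zp3 t _).mp hc with h1 | h1 | h1
  · exact absurd (congrArg K.u h1) (by simp only [mk_u, u_one]; decide)
  · have h2 := congrArg K.t h1
    have h3 : (1 : ZMod 7) = ((v2 : (ZMod 7)ˣ) : ZMod 7) := by linear_combination h2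
    exact absurd h3 (by decide)
  · exact absurd (congrArg K.u h1) (by simp only [mk_u, u_one]; decide)

lemma not_normal_zp6 (t : ZMod 7) : ¬ (zpowers (K.mk v5 t)).Normal := by
  intro h
  have hc := h.conj_mem _ (mem_zpowers (K.mk v5 t)) (K.mk 1 1)
  rw [conj_a] at hc
  rcases (mem_zp6 t _).mp hc with h1 | h1 | h1 | h1 | h1 | h1
  · exact absurd (congrArg K.u h1) (by simp only [mk_u, u_one]; decide)
  · have h2 := congrArg K.t h1
    have h3 : (1 : ZMod 7) = ((v5 : (ZMod 7)ˣ) : ZMod 7) := by linear_combination h2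
    exact absurd h3 (by decide)
  · exact absurd (congrArg K.u h1) (by simp only [mk_u, u_one]; decide)
  · exact absurd (congrArg K.u h1) (by simp only [mk_u, u_one]; decide)
  · exact absurd (congrArg K.u h1) (by simp only [mk_u, u_one]; decide)
  · exact absurd (congrArg K.u h1) (by simp only [mk_u, u_one]; decide)

lemma nonpower_of_not_normal {H : Subgroup K} (h : ¬ H.Normal) : IsNonpower H := by
  rintro ⟨m, _, rfl⟩
  exact h (powSub_normal K m)

abbrev Idx := (ZMod 7) ⊕ (ZMod 7) ⊕ (ZMod 7)

def Φ : Idx → Subgroup K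
  | .inl t => zpowers (K.mk v6 t)
  | .inr (.inl t) => zpowers (K.mk v2 t)
  | .inr (.inr t) => zpowers (K.mk v5 t)

lemma Φ_nonpower : ∀ p, IsNonpower (Φ p) := by
  rintro (t | t | t)
  · exact nonpower_of_not_normal (not_normal_zp2 t)
  · exact nonpower_of_not_normal (not_normal_zp3 t)
  · exact nonpower_of_not_normal (not_normal_zp6 t)

lemma Φ_inj : Function.Injective Φ := by
  rintro (t | t | t) (s | s | s) h <;> simp only [Φ] at h
  · have := (mem_zp2 s _).mp (h ▸ mem_zpowers (K.mk v6 t))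
    rcases this with h1 | h1
    · exact absurd (congrArg K.u h1) (by simp only [mk_u, u_one]; decide)
    · have hts : t = s := congrArg K.t h1
      rw [hts]
  · have := (mem_zp2 t _).mp (h.symm ▸ mem_zpowers (K.mk v2 s))
    rcases this with h1 | h1 <;> exact absurd (congrArg K.u h1) (by simp only [mk_u, u_one]; decide)
  · have := (mem_zp2 t _).mp (h.symm ▸ mem_zpowers (K.mk v5 s))
    rcases this with h1 | h1 <;> exact absurd (congrArg K.u h1) (by simp only [mk_u, u_one]; decide)
  · have := (mem_zp3 t _).mp (h.symm ▸ mem_zpowers (K.mk v6 s))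
    rcases this with h1 | h1 | h1 <;> exact absurd (congrArg K.u h1) (by simp only [mk_u, u_one]; decide)
  · have := (mem_zp3 s _).mp (h ▸ mem_zpowers (K.mk v2 t))
    rcases this with h1 | h1 | h1
    · exact absurd (congrArg K.u h1) (by simp only [mk_u, u_one]; decide)
    · have hts : t = s := congrArg K.t h1
      rw [hts]
    · exact absurd (congrArg K.u h1) (by simp only [mk_u, u_one]; decide)
  · have := (mem_zp3 t _).mp (h.symm ▸ mem_zpowers (K.mk v5 s))
    rcases this with h1 | h1 | h1 <;> exact absurd (congrArg K.u h1) (by simp only [mk_u, u_one]; decide)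
  · have := (mem_zp2 s _).mp (h ▸ mem_zpowers (K.mk v5 t))
    rcases this with h1 | h1 <;>
      exact absurd (congrArg K.u h1) (by simp only [mk_u, u_one]; decide)
  · have := (mem_zp3 s _).mp (h ▸ mem_zpowers (K.mk v5 t))
    rcases this with h1 | h1 | h1 <;>
      exact absurd (congrArg K.u h1) (by simp only [mk_u, u_one]; decide)
  · have := (mem_zp6 s _).mp (h ▸ mem_zpowers (K.mk v5 t))
    rcases this with h1 | h1 | h1 | h1 | h1 | h1
    · exact absurd (congrArg K.u h1) (by simp only [mk_u, u_one]; decide)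
    · have hts : t = s := congrArg K.t h1
      rw [hts]
    · exact absurd (congrArg K.u h1) (by simp only [mk_u, u_one]; decide)
    · exact absurd (congrArg K.u h1) (by simp only [mk_u, u_one]; decide)
    · exact absurd (congrArg K.u h1) (by simp only [mk_u, u_one]; decide)
    · exact absurd (congrArg K.u h1) (by simp only [mk_u, u_one]; decide)

lemma Φ_surj (H : Subgroup K) (hH : IsNonpower H) : ∃ p, Φ p = H := by
  rcases subgroup_classification H with h | h | h | h | h | ⟨t, h⟩ | ⟨t, h⟩ | ⟨t, h⟩
  · exact absurd ⟨42, by norm_num, h.trans powSub_42.symm⟩ hH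
  · exact absurd ⟨1, by norm_num, h.trans powSub_one.symm⟩ hH
  · exact absurd ⟨6, by norm_num, h.trans powSub_6.symm⟩ hH
  · exact absurd ⟨3, by norm_num, h.trans powSub_3.symm⟩ hH
  · exact absurd ⟨2, by norm_num, h.trans powSub_2.symm⟩ hH
  · exact ⟨.inl t, h.symm⟩
  · exact ⟨.inr (.inl t), h.symm⟩
  · exact ⟨.inr (.inr t), h.symm⟩

lemma nps_K : nps K = 21 := by
  have hbij : Function.Bijective (fun p : Idx => (⟨Φ p, Φ_nonpower p⟩ : {H : Subgroup K // IsNonpower H})) := by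
    constructor
    · intro p q h
      exact Φ_inj (congrArg Subtype.val h)
    · rintro ⟨H, hH⟩
      obtain ⟨p, hp⟩ := Φ_surj H hH
      exact ⟨p, Subtype.ext hp⟩
  have := Nat.card_eq_of_bijective _ hbij
  rw [nps, ← this]
  simp [Nat.card_eq_fintype_card]

end F42A


namespace F42A

lemma map_powSub {G H : Type*} [Group G] [Group H] (e : G ≃* H) (m : ℕ) :
    Subgroup.map e.toMonoidHom (powSub G m) = powSub H m := by
  rw [powSub, MonoidHom.map_closure, powSub]
  congr 1
  ext y
  constructor
  · rintro ⟨x, ⟨g, rfl⟩, rfl⟩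
    exact ⟨e g, (map_pow _ _ _).symm⟩
  · rintro ⟨h, rfl⟩
    refine ⟨(e.symm h) ^ m, ⟨e.symm h, rfl⟩, ?_⟩
    show e ((e.symm h) ^ m) = h ^ m
    rw [map_pow, e.apply_symm_apply]

lemma nps_congr {G H : Type*} [Group G] [Group H] (e : G ≃* H) : nps G = nps H := by
  have hiff : ∀ A : Subgroup G, (IsNonpower A ↔ IsNonpower (e.mapSubgroup A)) := by
    intro A
    rw [IsNonpower, IsNonpower, not_iff_not]
    have hmap : ∀ B : Subgroup G, e.mapSubgroup B = Subgroup.map e.toMonoidHom B := fun _ => rfl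
    constructor
    · rintro ⟨m, hm, rfl⟩
      exact ⟨m, hm, (hmap _).trans (map_powSub e m)⟩
    · rintro ⟨m, hm, hA⟩
      refine ⟨m, hm, ?_⟩
      have h2 : e.mapSubgroup A = e.mapSubgroup (powSub G m) := by
        rw [hA, hmap, map_powSub]
      exact e.mapSubgroup.injective h2
  exact Nat.card_congr ((e.mapSubgroup.toEquiv).subtypeEquiv hiff)

end F42A

namespace F42A
open Subgroup

section Gside

variable {G : Type*} [Group G]

lemma ab_rel {a b : G} (hrel : b⁻¹ * a * b = a ^ 3) : a * b = b * a ^ 3 := by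
  rw [← hrel]; group

lemma L1 {a b : G} (hrel : b⁻¹ * a * b = a ^ 3) (k : ℕ) : a ^ k * b = b * a ^ (3 * k) := by
  induction k with
  | zero => simp
  | succ k ih =>
    have h1 : a ^ (k + 1) * b = a * (a ^ k * b) := by
      rw [pow_succ']; group
    rw [h1, ih, ← mul_assoc, ab_rel hrel, mul_assoc, ← pow_add]
    congr 1
    ring

lemma L1' {a b : G} (ha : orderOf a = 7) (hrel : b⁻¹ * a * b = a ^ 3) (m : ℕ) :
    b * a ^ m = a ^ (5 * m) * b := by
  have h := L1 hrel (5 * m)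
  have h2 : a ^ (3 * (5 * m)) = a ^ m := by
    rw [pow_eq_pow_iff_modEq, ha]
    calc 3 * (5 * m) = 15 * m := by ring
      _ ≡ 1 * m [MOD 7] := Nat.ModEq.mul_right m (by decide)
      _ = m := one_mul m
  rw [h2] at h
  exact h.symm

lemma L2' {a b : G} (ha : orderOf a = 7) (hrel : b⁻¹ * a * b = a ^ 3) (j m : ℕ) :
    b ^ j * a ^ m = a ^ (5 ^ j * m) * b ^ j := by
  induction j generalizing m with
  | zero => simp
  | succ j ih =>
    have h1 : b ^ (j + 1) * a ^ m = b ^ j * (b * a ^ m) := by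
      rw [pow_succ]; group
    rw [h1, L1' ha hrel, ← mul_assoc, ih (5 * m), mul_assoc, ← pow_succ]
    congr 2
    ring

def dlog (u : (ZMod 7)ˣ) : ℕ :=
  if u = 1 then 0 else if u = v5 then 1 else if u = v4 then 2 else if u = v6 then 3
  else if u = v2 then 4 else 5

lemma dlog_spec : ∀ u : (ZMod 7)ˣ, (u : ZMod 7).val ≡ 5 ^ dlog u [MOD 7] := by decide

lemma dlog_add : ∀ u w : (ZMod 7)ˣ, dlog (u * w) ≡ dlog u + dlog w [MOD 6] := by decide

def Fmap (a b : G) (x : K) : G := a ^ x.t.val * b ^ dlog x.u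

lemma Fmap_mul {a b : G} (ha : orderOf a = 7) (hb : orderOf b = 6)
    (hrel : b⁻¹ * a * b = a ^ 3) (x y : K) :
    Fmap a b (x * y) = Fmap a b x * Fmap a b y := by
  show a ^ ((x.t + (x.u : ZMod 7) * y.t).val) * b ^ (dlog (x.u * y.u)) =
    a ^ x.t.val * b ^ dlog x.u * (a ^ y.t.val * b ^ dlog y.u)
  have hb2 : b ^ dlog (x.u * y.u) = b ^ (dlog x.u + dlog y.u) := by
    rw [pow_eq_pow_iff_modEq, hb]; exact dlog_add _ _
  have ha2 : a ^ ((x.t + (x.u : ZMod 7) * y.t).val) =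
      a ^ (x.t.val + 5 ^ dlog x.u * y.t.val) := by
    rw [pow_eq_pow_iff_modEq, ha]
    calc (x.t + (x.u : ZMod 7) * y.t).val
        ≡ x.t.val + ((x.u : ZMod 7) * y.t).val [MOD 7] := by
          rw [ZMod.val_add]; exact Nat.mod_modEq _ 7
      _ ≡ x.t.val + (x.u : ZMod 7).val * y.t.val [MOD 7] := by
          rw [ZMod.val_mul]; exact Nat.ModEq.add_left _ (Nat.mod_modEq _ 7)
      _ ≡ x.t.val + 5 ^ dlog x.u * y.t.val [MOD 7] :=
          Nat.ModEq.add_left _ ((dlog_spec x.u).mul_right _)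
  rw [ha2, hb2]
  have h4 : a ^ x.t.val * b ^ dlog x.u * (a ^ y.t.val * b ^ dlog y.u)
      = a ^ x.t.val * (b ^ dlog x.u * a ^ y.t.val) * b ^ dlog y.u := by group
  rw [h4, L2' ha hrel, pow_add a, pow_add b]
  group

lemma one_lt_card_sylow [Finite G] (p : ℕ) [Fact p.Prime] (hp7 : ¬ (7 : ℕ) ∣ p) (c z : G)
    (hc : orderOf c = p) (hz : orderOf z = 7)
    (hzc : ∃ g : G, (g⁻¹ * c * g) * c⁻¹ = z) : 1 < Nat.card (Sylow p G) := by
  by_contra hlt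
  have hpos : 0 < Nat.card (Sylow p G) := Nat.card_pos
  have h1 : Nat.card (Sylow p G) = 1 := by omega
  have hsub : Subsingleton (Sylow p G) := (Nat.card_eq_one_iff_unique.mp h1).1
  obtain ⟨P⟩ : Nonempty (Sylow p G) := inferInstance
  have hnorm : P.toSubgroup.Normal := by
    rw [← Subgroup.normalizer_eq_top_iff, Subgroup.eq_top_iff']
    intro g
    exact Sylow.smul_eq_iff_mem_normalizer.mp (Subsingleton.elim _ _)
  have hpg : IsPGroup p (Subgroup.zpowers c) :=
    IsPGroup.of_card (by rw [Nat.card_zpowers, hc, pow_one])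
  obtain ⟨Q, hQ⟩ := hpg.exists_le_sylow
  have hQP : Q = P := Subsingleton.elim _ _
  have hcP : c ∈ P.toSubgroup := by
    rw [← hQP]
    exact hQ (Subgroup.mem_zpowers c)
  obtain ⟨g, hg⟩ := hzc
  have hgP : g⁻¹ * c * g ∈ P.toSubgroup := by
    have := hnorm.conj_mem c hcP g⁻¹
    rwa [inv_inv] at this
  have hzP : z ∈ P.toSubgroup := hg ▸ mul_mem hgP (inv_mem hcP)
  obtain ⟨k, hk⟩ := P.isPGroup' ⟨z, hzP⟩
  have hz1 : z ^ (p ^ k) = 1 := by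
    have := congrArg Subtype.val hk
    simpa using this
  have h7k : (7 : ℕ) ∣ p ^ k := hz ▸ orderOf_dvd_of_pow_eq_one hz1
  exact hp7 ((by norm_num : Nat.Prime 7).dvd_of_dvd_pow h7k)

end Gside

end F42A


theorem nps_frobenius42 (G : Type*) [Group G] [Finite G]
    (a b : G) (ha : orderOf a = 7) (hb : orderOf b = 6)
    (hrel : b⁻¹ * a * b = a ^ 3)
    (hgen : Subgroup.closure {a, b} = ⊤) :
    nps G = 21 ∧
    ∃ p q : ℕ, p.Prime ∧ q.Prime ∧ p ≠ q ∧
      1 < Nat.card (Sylow p G) ∧ 1 < Nat.card (Sylow q G) := by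
  classical
  have hne : Nonempty G := ⟨a⟩
  -- the homomorphism from the model group
  let F : F42A.K →* G := MonoidHom.mk' (F42A.Fmap a b) (F42A.Fmap_mul ha hb hrel)
  have hFa : F (F42A.K.mk 1 1) = a := by
    show a ^ ((1 : ZMod 7).val) * b ^ F42A.dlog 1 = a
    rw [show ((1 : ZMod 7).val) = 1 from rfl, show F42A.dlog 1 = 0 by decide]
    simp
  have hFb : F (F42A.K.mk F42A.v5 0) = b := by
    show a ^ ((0 : ZMod 7).val) * b ^ F42A.dlog F42A.v5 = b
    rw [show ((0 : ZMod 7).val) = 0 from rfl, show F42A.dlog F42A.v5 = 1 by decide]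
    simp
  have hsurj : Function.Surjective F := by
    have hle : Subgroup.closure ({a, b} : Set G) ≤ F.range := by
      rw [Subgroup.closure_le]
      intro x hx
      simp only [Set.mem_insert_iff, Set.mem_singleton_iff] at hx
      rcases hx with rfl | rfl
      · exact ⟨F42A.K.mk 1 1, hFa⟩
      · exact ⟨F42A.K.mk F42A.v5 0, hFb⟩
    rw [hgen] at hle
    intro g
    exact hle (Subgroup.mem_top g)
  have hcardG : Nat.card G = 42 := by
    have h7 : (7 : ℕ) ∣ Nat.card G := ha ▸ orderOf_dvd_natCard a
    have h6 : (6 : ℕ) ∣ Nat.card G := hb ▸ orderOf_dvd_natCard b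
    have h42 : (42 : ℕ) ∣ Nat.card G := by
      have := Nat.Coprime.mul_dvd_of_dvd_of_dvd (by norm_num : Nat.Coprime 7 6) h7 h6
      simpa using this
    have hle : Nat.card G ≤ 42 := by
      have := Nat.card_le_card_of_surjective F hsurj
      rwa [F42A.card_K] at this
    have hpos : 0 < Nat.card G := Nat.card_pos
    exact le_antisymm hle (Nat.le_of_dvd hpos h42)
  have hbij : Function.Bijective F :=
    (Nat.bijective_iff_surjective_and_card F).mpr ⟨hsurj, by rw [F42A.card_K, hcardG]⟩
  let e : F42A.K ≃* G := MulEquiv.ofBijective F hbij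
  constructor
  · rw [← F42A.nps_congr e, F42A.nps_K]
  · -- Sylow counts
    haveI : Fact (Nat.Prime 2) := ⟨by norm_num⟩
    haveI : Fact (Nat.Prime 3) := ⟨by norm_num⟩
    refine ⟨2, 3, by norm_num, by norm_num, by norm_num, ?_, ?_⟩
    · refine F42A.one_lt_card_sylow 2 (by norm_num) (b ^ 3) (a ^ 5)
        (by rw [orderOf_pow, hb]; norm_num) (by rw [orderOf_pow, ha]; norm_num) ⟨a, ?_⟩
      have hba : b ^ 3 * a = a ^ 6 * b ^ 3 := by
        have h := F42A.L2' ha hrel 3 1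
        rw [pow_one] at h
        have h2 : a ^ (5 ^ 3 * 1) = a ^ 6 := by
          rw [pow_eq_pow_iff_modEq, ha]; decide
        rw [h2] at h
        exact h
      have h3 : a⁻¹ * b ^ 3 * a * (b ^ 3)⁻¹ = a⁻¹ * (b ^ 3 * a) * (b ^ 3)⁻¹ := by group
      rw [h3, hba]
      have h4 : a⁻¹ * (a ^ 6 * b ^ 3) * (b ^ 3)⁻¹ = a ^ 5 := by group
      rw [h4]
    · refine F42A.one_lt_card_sylow 3 (by norm_num) (b ^ 2) (a ^ 3)
        (by rw [orderOf_pow, hb]; norm_num) (by rw [orderOf_pow, ha]; norm_num) ⟨a, ?_⟩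
      have hba : b ^ 2 * a = a ^ 4 * b ^ 2 := by
        have h := F42A.L2' ha hrel 2 1
        rw [pow_one] at h
        have h2 : a ^ (5 ^ 2 * 1) = a ^ 4 := by
          rw [pow_eq_pow_iff_modEq, ha]; decide
        rw [h2] at h
        exact h
      have h3 : a⁻¹ * b ^ 2 * a * (b ^ 2)⁻¹ = a⁻¹ * (b ^ 2 * a) * (b ^ 2)⁻¹ := by group
      rw [h3, hba]
      have h4 : a⁻¹ * (a ^ 4 * b ^ 2) * (b ^ 2)⁻¹ = a ^ 3 := by group
      rw [h4]
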